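/- Let μ, σ, Δ, λ > 0, a ≥ 0, and define r(x;a) = (x+μΔ-a-λ)·N((x+μΔ)/(σ√Δ)) + σ√Δ·φ₀((x+μΔ)/(σ√Δ)) - e^{-2μx/σ²}·((-x+μΔ-a-λ)·N((-x+μΔ)/(σ√Δ)) + σ√Δ·φ₀((-x+μΔ)/(σ√Δ))), where N and φ₀ are the standard normal CDF and density. Then as x → ∞: r(x;a) → ∞, r'(x;a) → 1, and r''(x;a) → 0. -/

import Mathlib

open Real Filter

/-- The standard normal cumulative distribution function. -/
noncomputable def stdNormalCDF (t : ℝ) : ℝ :=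
  ∫ u in Set.Iio t, (1 / Real.sqrt (2 * Real.pi)) * Real.exp (-u ^ 2 / 2)

/-- The standard normal density. -/
noncomputable def stdNormalPDF (t : ℝ) : ℝ :=
  (1 / Real.sqrt (2 * Real.pi)) * Real.exp (-t ^ 2 / 2)

/-!
Write `k = σ√Δ`, `c = a + λ`, `m = 2μ/σ²` and `f y = (y - c) N(y/k) + k φ(y/k)`, so that
`r x = f (x + μΔ) - e^{-m x} f (μΔ - x)`. Since `φ' t = -t φ t`, the derivatives of `f` are
`N(y/k) - (c/k) φ(y/k)` and `(φ(y/k) + (c/k)(y/k) φ(y/k)) / k`. As `y → ∞` they tend to `1` and `0`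
(because `N → 1` and `φ t, t φ t → 0`) while `f → ∞`; as `y → -∞`, `f`, `f'`, `f''` grow at most
linearly. Each derivative of the reflected term `e^{-m x} f (μΔ - x)` is `e^{-m x}` times a linear
combination of `f, f', f''` at `μΔ - x`, hence `O(x e^{-m x}) → 0`.
-/

open MeasureTheory Topology Asymptotics ProbabilityTheory

lemma stdNormalPDF_eq_gaussianPDFReal : stdNormalPDF = gaussianPDFReal 0 1 := by
  ext t
  simp [stdNormalPDF, gaussianPDFReal]

lemma integrable_stdNormalPDF : Integrable stdNormalPDF :=
  stdNormalPDF_eq_gaussianPDFReal ▸ integrable_gaussianPDFReal 0 1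

lemma integral_stdNormalPDF : ∫ t, stdNormalPDF t = 1 :=
  stdNormalPDF_eq_gaussianPDFReal ▸ integral_gaussianPDFReal_eq_one 0 one_ne_zero

lemma stdNormalPDF_nonneg (t : ℝ) : 0 ≤ stdNormalPDF t :=
  stdNormalPDF_eq_gaussianPDFReal ▸ gaussianPDFReal_nonneg 0 1 t

lemma stdNormalPDF_le_stdNormalPDF_zero (t : ℝ) : stdNormalPDF t ≤ stdNormalPDF 0 := by
  unfold stdNormalPDF
  exact mul_le_mul_of_nonneg_left (exp_le_exp.2 (by nlinarith [sq_nonneg t])) (by positivity)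

lemma hasDerivAt_stdNormalPDF (t : ℝ) : HasDerivAt stdNormalPDF (-t * stdNormalPDF t) t := by
  have h : HasDerivAt (fun u : ℝ => -u ^ 2 / 2) (-t) t := by
    simpa [neg_div] using ((hasDerivAt_pow 2 t).fun_neg).div_const 2
  exact (h.exp.const_mul _).congr_deriv (by simp only [stdNormalPDF]; ring)

lemma tendsto_rpow_abs_mul_stdNormalPDF_cocompact (s : ℝ) :
    Tendsto (fun t => |t| ^ s * stdNormalPDF t) (cocompact ℝ) (𝓝 0) := by
  have h := (tendsto_rpow_abs_mul_exp_neg_mul_sq_cocompact one_half_pos s).const_mul (1 / √(2 * π))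
  rw [mul_zero] at h
  refine h.congr fun t => ?_
  simp only [stdNormalPDF]
  ring_nf

lemma tendsto_stdNormalPDF_atTop : Tendsto stdNormalPDF atTop (𝓝 0) := by
  simpa using (tendsto_rpow_abs_mul_stdNormalPDF_cocompact 0).mono_left atTop_le_cocompact

lemma tendsto_mul_stdNormalPDF_atTop : Tendsto (fun t => t * stdNormalPDF t) atTop (𝓝 0) := by
  refine ((tendsto_rpow_abs_mul_stdNormalPDF_cocompact 1).mono_left atTop_le_cocompact).congr' ?_
  filter_upwards [eventually_ge_atTop 0] with t ht
  rw [rpow_one, abs_of_nonneg ht]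

lemma stdNormalCDF_eq_integral_Iic (t : ℝ) : stdNormalCDF t = ∫ u in Set.Iic t, stdNormalPDF u :=
  integral_Iic_eq_integral_Iio.symm

lemma stdNormalCDF_eq_add_intervalIntegral (t : ℝ) :
    stdNormalCDF t = stdNormalCDF 0 + ∫ u in (0 : ℝ)..t, stdNormalPDF u := by
  rw [← intervalIntegral.integral_Iic_sub_Iic integrable_stdNormalPDF.integrableOn
    integrable_stdNormalPDF.integrableOn, stdNormalCDF_eq_integral_Iic,
    stdNormalCDF_eq_integral_Iic]
  ring

lemma hasDerivAt_stdNormalCDF (t : ℝ) : HasDerivAt stdNormalCDF (stdNormalPDF t) t := by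
  have hφ : Continuous stdNormalPDF := by unfold stdNormalPDF; fun_prop
  have h := (intervalIntegral.integral_hasDerivAt_right (hφ.intervalIntegrable 0 t)
    (hφ.stronglyMeasurableAtFilter _ _) hφ.continuousAt).const_add (stdNormalCDF 0)
  exact h.congr_of_eventuallyEq (.of_forall stdNormalCDF_eq_add_intervalIntegral)

lemma tendsto_stdNormalCDF_atTop : Tendsto stdNormalCDF atTop (𝓝 1) := by
  have h := (intervalIntegral_tendsto_integral_Ioi 0 integrable_stdNormalPDF.integrableOn
    tendsto_id).const_add (stdNormalCDF 0)
  have hlim : stdNormalCDF 0 + ∫ u in Set.Ioi 0, stdNormalPDF u = 1 := by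
    rw [stdNormalCDF_eq_integral_Iic, intervalIntegral.integral_Iic_add_Ioi
      integrable_stdNormalPDF.integrableOn integrable_stdNormalPDF.integrableOn,
      integral_stdNormalPDF]
  rw [hlim] at h
  exact h.congr fun t => (stdNormalCDF_eq_add_intervalIntegral t).symm

lemma abs_stdNormalCDF_le_one (t : ℝ) : |stdNormalCDF t| ≤ 1 := by
  have h0 : 0 ≤ stdNormalCDF t :=
    setIntegral_nonneg measurableSet_Iio fun u _ => stdNormalPDF_nonneg u
  have h1 : stdNormalCDF t ≤ 1 := integral_stdNormalPDF ▸
    setIntegral_le_integral integrable_stdNormalPDF (.of_forall stdNormalPDF_nonneg)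
  exact abs_le.2 ⟨by linarith, h1⟩

lemma stdNormalCDF_comp_isBigO_one {α : Type*} (l : Filter α) (g : α → ℝ) :
    (fun x => stdNormalCDF (g x)) =O[l] fun _ => (1 : ℝ) :=
  .of_bound 1 (.of_forall fun x => by simpa using abs_stdNormalCDF_le_one (g x))

lemma stdNormalPDF_comp_isBigO_one {α : Type*} (l : Filter α) (g : α → ℝ) :
    (fun x => stdNormalPDF (g x)) =O[l] fun _ => (1 : ℝ) :=
  .of_bound (stdNormalPDF 0) (.of_forall fun x => by
    simpa [abs_of_nonneg (stdNormalPDF_nonneg _)] using stdNormalPDF_le_stdNormalPDF_zero (g x))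

/-- For `Y ~ N(y, k²)` this is `E[(Y - c) 1{Y > 0}]`. -/
noncomputable def gaussPayout (k c y : ℝ) : ℝ :=
  (y - c) * stdNormalCDF (y / k) + k * stdNormalPDF (y / k)

section gaussPayout

variable {k : ℝ} (c : ℝ)

lemma hasDerivAt_gaussPayout (hk : k ≠ 0) (y : ℝ) :
    HasDerivAt (gaussPayout k c) (stdNormalCDF (y / k) - c / k * stdNormalPDF (y / k)) y := by
  have hy : HasDerivAt (· / k) (1 / k) y := (hasDerivAt_id y).div_const k
  have h := (((hasDerivAt_id y).sub_const c).mul ((hasDerivAt_stdNormalCDF _).comp y hy)).add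
    (((hasDerivAt_stdNormalPDF _).comp y hy).const_mul k)
  refine h.congr_deriv ?_
  simp only [Function.comp_apply, id_eq]
  field_simp
  ring

lemma hasDerivAt_gaussPayout_deriv (hk : k ≠ 0) (y : ℝ) :
    HasDerivAt (fun y => stdNormalCDF (y / k) - c / k * stdNormalPDF (y / k))
      ((stdNormalPDF (y / k) + c / k * (y / k * stdNormalPDF (y / k))) / k) y := by
  have hy : HasDerivAt (· / k) (1 / k) y := (hasDerivAt_id y).div_const k
  have h := ((hasDerivAt_stdNormalCDF _).comp y hy).sub
    (((hasDerivAt_stdNormalPDF _).comp y hy).const_mul (c / k))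
  refine h.congr_deriv ?_
  field_simp
  ring

lemma tendsto_gaussPayout_atTop (hk : 0 < k) : Tendsto (gaussPayout k c) atTop atTop := by
  have hy : Tendsto (· / k) atTop atTop := tendsto_id.atTop_div_const hk
  have hlin : Tendsto (fun y : ℝ => y - c) atTop atTop :=
    tendsto_atTop_add_const_right _ _ tendsto_id
  exact (hlin.atTop_mul_pos one_pos (tendsto_stdNormalCDF_atTop.comp hy)).atTop_add
    ((tendsto_stdNormalPDF_atTop.comp hy).const_mul k)

lemma tendsto_gaussPayout_deriv_atTop (hk : 0 < k) :
    Tendsto (fun y => stdNormalCDF (y / k) - c / k * stdNormalPDF (y / k)) atTop (𝓝 1) := by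
  have hy : Tendsto (· / k) atTop atTop := tendsto_id.atTop_div_const hk
  simpa using (tendsto_stdNormalCDF_atTop.comp hy).sub
    ((tendsto_stdNormalPDF_atTop.comp hy).const_mul (c / k))

lemma tendsto_gaussPayout_deriv2_atTop (hk : 0 < k) :
    Tendsto (fun y => (stdNormalPDF (y / k) + c / k * (y / k * stdNormalPDF (y / k))) / k)
      atTop (𝓝 0) := by
  have hy : Tendsto (· / k) atTop atTop := tendsto_id.atTop_div_const hk
  simpa using ((tendsto_stdNormalPDF_atTop.comp hy).add
    ((tendsto_mul_stdNormalPDF_atTop.comp hy).const_mul (c / k))).div_const k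

lemma gaussPayout_isBigO_atBot : gaussPayout k c =O[atBot] fun y => y := by
  have hlin : (fun y => y - c) =O[atBot] fun y => y :=
    (isBigO_refl (fun y : ℝ => y) atBot).sub (isLittleO_const_id_atBot c).isBigO
  have hcdf : (fun y => (y - c) * stdNormalCDF (y / k)) =O[atBot] fun y => y := by
    simpa using hlin.mul (stdNormalCDF_comp_isBigO_one atBot (· / k))
  exact hcdf.add (((stdNormalPDF_comp_isBigO_one atBot (· / k)).trans
    (isLittleO_const_id_atBot 1).isBigO).const_mul_left k)

lemma gaussPayout_deriv_isBigO_atBot :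
    (fun y => stdNormalCDF (y / k) - c / k * stdNormalPDF (y / k)) =O[atBot] fun y => y := by
  exact ((stdNormalCDF_comp_isBigO_one atBot (· / k)).sub
    ((stdNormalPDF_comp_isBigO_one atBot (· / k)).const_mul_left _)).trans
    (isLittleO_const_id_atBot 1).isBigO

lemma gaussPayout_deriv2_isBigO_atBot :
    (fun y => (stdNormalPDF (y / k) + c / k * (y / k * stdNormalPDF (y / k))) / k)
      =O[atBot] fun y => y := by
  have hφ := stdNormalPDF_comp_isBigO_one atBot (· / k)
  have hlin : (fun y => y / k * stdNormalPDF (y / k)) =O[atBot] fun y => y := by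
    simpa [div_eq_inv_mul] using ((isBigO_refl (fun y : ℝ => y) atBot).const_mul_left k⁻¹).mul hφ
  have h := ((hφ.trans (isLittleO_const_id_atBot 1).isBigO).add
    (hlin.const_mul_left (c / k))).const_mul_left k⁻¹
  exact h.congr_left fun y => by ring

end gaussPayout

noncomputable def reflectedDiff (f : ℝ → ℝ) (m d x : ℝ) : ℝ :=
  f (x + d) - exp (-m * x) * f (d - x)

section reflectedDiff

variable {m d : ℝ}

lemma hasDerivAt_exp_mul_comp_sub {u : ℝ → ℝ} {u' x : ℝ} (hu : HasDerivAt u u' (d - x)) :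
    HasDerivAt (fun x => exp (-m * x) * u (d - x)) (-(exp (-m * x) * (m * u (d - x) + u'))) x := by
  have he := ((hasDerivAt_id x).const_mul (-m)).exp
  have hu' := hu.comp x ((hasDerivAt_id x).const_sub d)
  refine (he.mul hu').congr_deriv ?_
  simp only [id_eq, Function.comp_apply]
  ring

lemma tendsto_exp_mul_comp_sub_atTop (hm : 0 < m) {u : ℝ → ℝ} (hu : u =O[atBot] fun y => y) :
    Tendsto (fun x => exp (-m * x) * u (d - x)) atTop (𝓝 0) := by
  have hsub : Tendsto (fun x : ℝ => d - x) atTop atBot := by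
    simpa [sub_eq_add_neg] using tendsto_atBot_add_const_left atTop d tendsto_neg_atTop_atBot
  have hlin : (fun x => u (d - x)) =O[atTop] fun x => x :=
    (hu.comp_tendsto hsub).trans ((isLittleO_const_id_atTop d).isBigO.sub (isBigO_refl _ _))
  have hexp : Tendsto (fun x => exp (-m * x) * x) atTop (𝓝 0) := by
    simpa [mul_comm] using tendsto_rpow_mul_exp_neg_mul_atTop_nhds_zero 1 m hm
  exact ((isBigO_refl _ _).mul hlin).trans_tendsto hexp

variable {f f' f'' : ℝ → ℝ} (hf : ∀ y, HasDerivAt f (f' y) y)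
include hf

lemma hasDerivAt_reflectedDiff (x : ℝ) :
    HasDerivAt (reflectedDiff f m d)
      (f' (x + d) + exp (-m * x) * (m * f (d - x) + f' (d - x))) x := by
  have h := ((hf (x + d)).comp x ((hasDerivAt_id x).add_const d)).fun_sub
    (hasDerivAt_exp_mul_comp_sub (m := m) (hf (d - x)))
  exact h.congr_deriv (by rw [mul_one, sub_neg_eq_add])

lemma hasDerivAt_reflectedDiff_deriv (hf' : ∀ y, HasDerivAt f' (f'' y) y) (x : ℝ) :
    HasDerivAt (fun x => f' (x + d) + exp (-m * x) * (m * f (d - x) + f' (d - x)))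
      (f'' (x + d) - exp (-m * x) * (m * (m * f (d - x) + f' (d - x))
        + (m * f' (d - x) + f'' (d - x)))) x := by
  have h := ((hf' (x + d)).comp x ((hasDerivAt_id x).add_const d)).fun_add
    (hasDerivAt_exp_mul_comp_sub (m := m) (((hf (d - x)).const_mul m).fun_add (hf' (d - x))))
  exact h.congr_deriv (by rw [mul_one, ← sub_eq_add_neg])

theorem tendsto_reflectedDiff (hm : 0 < m) (hf' : ∀ y, HasDerivAt f' (f'' y) y)
    (hf_top : Tendsto f atTop atTop) (hf'_top : Tendsto f' atTop (𝓝 1))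
    (hf''_top : Tendsto f'' atTop (𝓝 0)) (hf_bot : f =O[atBot] fun y => y)
    (hf'_bot : f' =O[atBot] fun y => y) (hf''_bot : f'' =O[atBot] fun y => y) :
    Tendsto (reflectedDiff f m d) atTop atTop ∧
      Tendsto (deriv (reflectedDiff f m d)) atTop (𝓝 1) ∧
      Tendsto (deriv (deriv (reflectedDiff f m d))) atTop (𝓝 0) := by
  have hshift : Tendsto (· + d) atTop atTop := tendsto_atTop_add_const_right _ d tendsto_id
  have hg_bot := (hf_bot.const_mul_left m).add hf'_bot
  have hg'_bot := (hf'_bot.const_mul_left m).add hf''_bot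
  have hderiv : deriv (reflectedDiff f m d) = _ :=
    funext fun x => (hasDerivAt_reflectedDiff (m := m) (d := d) hf x).deriv
  have hderiv2 : deriv (deriv (reflectedDiff f m d)) = _ :=
    hderiv ▸ funext fun x => (hasDerivAt_reflectedDiff_deriv (m := m) (d := d) hf hf' x).deriv
  refine ⟨?_, ?_, ?_⟩
  · exact ((hf_top.comp hshift).atTop_add
      (tendsto_exp_mul_comp_sub_atTop (d := d) hm hf_bot).neg).congr
      fun x => (sub_eq_add_neg _ _).symm
  · simpa [hderiv] using
      (hf'_top.comp hshift).add (tendsto_exp_mul_comp_sub_atTop (d := d) hm hg_bot)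
  · simpa [hderiv2] using (hf''_top.comp hshift).sub
      (tendsto_exp_mul_comp_sub_atTop (d := d) hm ((hg_bot.const_mul_left m).add hg'_bot))

end reflectedDiff

theorem BM_reward_asymptotics_general (μ σ Δ lam : ℝ) (hμ : 0 < μ) (hσ : 0 < σ) (hΔ : 0 < Δ)
    (a : ℝ) (r : ℝ → ℝ)
    (hr : r = fun x =>
      (x + μ * Δ - a - lam) * stdNormalCDF ((x + μ * Δ) / (σ * Real.sqrt Δ))
        + σ * Real.sqrt Δ * stdNormalPDF ((x + μ * Δ) / (σ * Real.sqrt Δ))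
        - Real.exp (-2 * μ * x / σ ^ 2) *
            ((-x + μ * Δ - a - lam) * stdNormalCDF ((-x + μ * Δ) / (σ * Real.sqrt Δ))
              + σ * Real.sqrt Δ * stdNormalPDF ((-x + μ * Δ) / (σ * Real.sqrt Δ)))) :
    Tendsto r atTop atTop ∧ Tendsto (deriv r) atTop (nhds 1) ∧
      Tendsto (deriv (deriv r)) atTop (nhds 0) := by
  have hk : 0 < σ * √Δ := by positivity
  have hr' : r = reflectedDiff (gaussPayout (σ * √Δ) (a + lam)) (2 * μ / σ ^ 2) (μ * Δ) := by
    rw [hr]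
    funext x
    simp only [reflectedDiff, gaussPayout]
    ring_nf
  rw [hr']
  exact tendsto_reflectedDiff (hasDerivAt_gaussPayout _ hk.ne') (by positivity)
    (hasDerivAt_gaussPayout_deriv _ hk.ne') (tendsto_gaussPayout_atTop _ hk)
    (tendsto_gaussPayout_deriv_atTop _ hk) (tendsto_gaussPayout_deriv2_atTop _ hk)
    (gaussPayout_isBigO_atBot _) (gaussPayout_deriv_isBigO_atBot _)
    (gaussPayout_deriv2_isBigO_atBot _)

theorem BM_reward_asymptotics (μ σ Δ lam : ℝ) (hμ : 0 < μ) (hσ : 0 < σ) (hΔ : 0 < Δ)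
    (hlam : 0 < lam) (a : ℝ) (ha : 0 ≤ a) (r : ℝ → ℝ)
    (hr : r = fun x =>
      (x + μ * Δ - a - lam) * stdNormalCDF ((x + μ * Δ) / (σ * Real.sqrt Δ))
        + σ * Real.sqrt Δ * stdNormalPDF ((x + μ * Δ) / (σ * Real.sqrt Δ))
        - Real.exp (-2 * μ * x / σ ^ 2) *
            ((-x + μ * Δ - a - lam) * stdNormalCDF ((-x + μ * Δ) / (σ * Real.sqrt Δ))
              + σ * Real.sqrt Δ * stdNormalPDF ((-x + μ * Δ) / (σ * Real.sqrt Δ)))) :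
    Tendsto r atTop atTop ∧ Tendsto (deriv r) atTop (nhds 1) ∧
      Tendsto (deriv (deriv r)) atTop (nhds 0) :=
  BM_reward_asymptotics_general μ σ Δ lam hμ hσ hΔ a r hr
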